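/- Generalized inference (semantic deduction theorem): Γ ⊩_B^L φ if and only if for all bases C ⊇ B and atomic multisets K, ⊩_C^K Γ implies ⊩_C^{L⊎K} φ. -/

import Mathlib

abbrev Atom := ℕ
abbrev ASeq := Multiset Atom × Atom
abbrev Box := Multiset ASeq
abbrev ARule := Multiset Box × Box × Atom
abbrev Base := Set ARule

/-- An atom `d` is persistent in `B` if there is a rule `⟨∅, S, d⟩ ∈ B` with `S` nonempty. -/
def Persistent (B : Base) (d : Atom) : Prop :=
  ∃ S : Box, S ≠ 0 ∧ ((0 : Multiset Box), S, d) ∈ B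

/-- Atomic derivability in a base. -/
inductive Deriv (B : Base) : Multiset Atom → Atom → Prop
  | ref (p : Atom) : Deriv B {p} p
  | app (S : Box) (p : Atom)
      (bc : List (Box × Multiset Atom))
      (dc : List (Atom × Multiset Atom))
      (hrule : ((↑(bc.map Prod.fst) : Multiset Box), S, p) ∈ B)
      (hpers : ∀ x ∈ dc, Persistent B x.1)
      (hbox : ∀ x ∈ bc, ∀ s ∈ x.1, Deriv B (x.2 + s.1) s.2)
      (hd : ∀ x ∈ dc, Deriv B x.2 x.1)
      (hS : ∀ s ∈ S, Deriv B ((↑(dc.map Prod.fst) : Multiset Atom) + s.1) s.2) :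
      Deriv B ((bc.map Prod.snd).sum + (dc.map Prod.snd).sum) p

/-- Formulas of intuitionistic linear logic. -/
inductive Fml : Type
  | atom : Atom → Fml
  | top : Fml
  | zero : Fml
  | one : Fml
  | limp : Fml → Fml → Fml
  | tens : Fml → Fml → Fml
  | wth : Fml → Fml → Fml
  | plus : Fml → Fml → Fml
  | bang : Fml → Fml
deriving DecidableEq

/-- The degree of a formula. -/
def deg : Fml → ℕ
  | .atom _ => 1
  | .top => 2
  | .zero => 2
  | .one => 2
  | .limp φ ψ => deg φ + deg ψ + 1
  | .tens φ ψ => deg φ + deg ψ + 1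
  | .wth φ ψ => deg φ + deg ψ + 1
  | .plus φ ψ => deg φ + deg ψ + 1
  | .bang φ => deg φ + 1

theorem one_le_deg (φ : Fml) : 1 ≤ deg φ := by
  cases φ <;> simp [deg] <;> omega

mutual
  /-- Support `⊩_B^L φ` (empty left-hand side). -/
  def Supp : Base → Multiset Atom → Fml → Prop
    | B, L, .atom p => Deriv B L p
    | _, _, .top => True
    | B, L, .zero => ∀ (K : Multiset Atom) (p : Atom), Supp B (L + K) (.atom p)
    | B, L, .one => ∀ C : Base, B ⊆ C → ∀ (K : Multiset Atom) (p : Atom),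
        Supp C K (.atom p) → Supp C (L + K) (.atom p)
    | B, L, .limp φ ψ => SuppInf1 B L φ ψ
    | B, L, .tens φ ψ => ∀ C : Base, B ⊆ C → ∀ (K : Multiset Atom) (p : Atom),
        SuppInf2 C K φ ψ (.atom p) → Supp C (L + K) (.atom p)
    | B, L, .wth φ ψ => Supp B L φ ∧ Supp B L ψ
    | B, L, .plus φ ψ => ∀ C : Base, B ⊆ C → ∀ (K : Multiset Atom) (p : Atom),
        SuppInf1 C K φ (.atom p) → SuppInf1 C K ψ (.atom p) → Supp C (L + K) (.atom p)
    | B, L, .bang φ => ∀ C : Base, B ⊆ C → ∀ (K : Multiset Atom) (p : Atom),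
        (∀ D : Base, C ⊆ D → Supp D 0 φ → Supp D K (.atom p)) → Supp C (L + K) (.atom p)
  termination_by B L φ => 2 * deg φ
  decreasing_by
    all_goals
      try simp only [deg]
      try have h1 := one_le_deg φ
      try have h2 := one_le_deg ψ
      try have h3 := one_le_deg χ
      try have h4 := one_le_deg α
      try have h5 := one_le_deg β
      omega

  /-- The (Inf) clause for a singleton context `{φ} ⊩_B^L χ`. -/
  def SuppInf1 : Base → Multiset Atom → Fml → Fml → Prop
    | B, L, .bang α, χ => ∀ C : Base, B ⊆ C → Supp C 0 α → Supp C L χ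
    | B, L, φ, χ => ∀ C : Base, B ⊆ C → ∀ K : Multiset Atom,
        Supp C K φ → Supp C (L + K) χ
  termination_by B L φ χ => 2 * (deg φ + deg χ) - 1
  decreasing_by
    all_goals
      try simp only [deg]
      try have h1 := one_le_deg φ
      try have h2 := one_le_deg ψ
      try have h3 := one_le_deg χ
      try have h4 := one_le_deg α
      try have h5 := one_le_deg β
      omega

  /-- The (Inf) clause for a two-element context `{φ, ψ} ⊩_B^L χ`. -/
  def SuppInf2 : Base → Multiset Atom → Fml → Fml → Fml → Prop
    | B, L, .bang α, .bang β, χ => ∀ C : Base, B ⊆ C →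
        Supp C 0 α → Supp C 0 β → Supp C L χ
    | B, L, .bang α, ψ, χ => ∀ C : Base, B ⊆ C → ∀ K : Multiset Atom,
        Supp C 0 α → Supp C K ψ → Supp C (L + K) χ
    | B, L, φ, .bang β, χ => ∀ C : Base, B ⊆ C → ∀ K : Multiset Atom,
        Supp C 0 β → Supp C K φ → Supp C (L + K) χ
    | B, L, φ, ψ, χ => ∀ C : Base, B ⊆ C → ∀ K₁ K₂ : Multiset Atom,
        Supp C K₁ φ → Supp C K₂ ψ → Supp C (L + K₁ + K₂) χ
  termination_by B L φ ψ χ => 2 * (deg φ + deg ψ + deg χ) - 1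
  decreasing_by
    all_goals
      try simp only [deg]
      try have h1 := one_le_deg φ
      try have h2 := one_le_deg ψ
      try have h3 := one_le_deg χ
      try have h4 := one_le_deg α
      try have h5 := one_le_deg β
      omega
end

/-- Is the formula a `!`-formula? -/
def isBang : Fml → Bool
  | .bang _ => true
  | _ => false

/-- Strip a top-level `!`. -/
def unbang : Fml → Fml
  | .bang φ => φ
  | φ => φ

/-- Support for a multiset of formulas: the `(⊎)` clause. -/
def SuppMS (B : Base) (L : Multiset Atom) (Γ : Multiset Fml) : Prop :=
  ∃ l : List (Fml × Multiset Atom), (↑(l.map Prod.fst) : Multiset Fml) = Γ ∧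
    (l.map Prod.snd).sum = L ∧ ∀ x ∈ l, Supp B x.2 x.1

/-- The official (Inf) clause: `Γ ⊩_B^L φ`, where `Γ = !Δ ⊎ Θ`. -/
def SuppSeq (B : Base) (L : Multiset Atom) (Γ : Multiset Fml) (φ : Fml) : Prop :=
  ∀ C : Base, B ⊆ C → ∀ K : Multiset Atom,
    SuppMS C 0 ((Γ.filter (fun ψ => isBang ψ = true)).map unbang) →
    SuppMS C K (Γ.filter (fun ψ => isBang ψ = false)) →
    Supp C (L + K) φ

/-- Validity of a sequent `(Γ : φ)`. -/
def Valid (Γ : Multiset Fml) (φ : Fml) : Prop :=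
  ∀ B : Base, SuppSeq B 0 Γ φ


theorem deriv_mono {B C : Base} (h : B ⊆ C) {L : Multiset Atom} {p : Atom}
    (hd : Deriv B L p) : Deriv C L p := by
  induction hd with
  | ref p => exact .ref p
  | app S p bc dc hrule hpers hbox hd hS ihbox ihd ihS =>
    exact .app S p bc dc (h hrule)
      (fun x hx => (hpers x hx).imp (fun S hS => ⟨hS.1, h hS.2⟩))
      ihbox ihd ihS
theorem inf1_mono {B C : Base} (h : B ⊆ C) {L : Multiset Atom} {φ χ : Fml}
    (hs : SuppInf1 B L φ χ) : SuppInf1 C L φ χ := by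
  cases φ <;> simp only [SuppInf1] at hs ⊢ <;>
    exact fun D hD => hs D (h.trans hD)

theorem inf2_mono {B C : Base} (h : B ⊆ C) {L : Multiset Atom} {φ ψ χ : Fml}
    (hs : SuppInf2 B L φ ψ χ) : SuppInf2 C L φ ψ χ := by
  cases φ <;> cases ψ <;> simp only [SuppInf2] at hs ⊢ <;>
    exact fun D hD => hs D (h.trans hD)
theorem supp_mono {B C : Base} (h : B ⊆ C) {L : Multiset Atom} : ∀ {φ : Fml},
    Supp B L φ → Supp C L φ := by
  intro φ
  cases φ with
  | atom p => simp only [Supp]; exact fun hs => deriv_mono h hs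
  | top => simp only [Supp]; exact fun _ => trivial
  | zero =>
    simp only [Supp]
    exact fun hs K p => deriv_mono h (hs K p)
  | one =>
    simp only [Supp]
    exact fun hs D hD => hs D (h.trans hD)
  | limp φ ψ =>
    simp only [Supp]
    exact inf1_mono h
  | tens φ ψ =>
    simp only [Supp]
    exact fun hs D hD => hs D (h.trans hD)
  | wth φ ψ =>
    simp only [Supp]
    exact fun hs => ⟨supp_mono h hs.1, supp_mono h hs.2⟩
  | plus φ ψ =>
    simp only [Supp]
    exact fun hs D hD => hs D (h.trans hD)
  | bang φ =>
    simp only [Supp]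
    exact fun hs D hD => hs D (h.trans hD)
theorem bang_intro {B : Base} {φ : Fml} (h : Supp B 0 φ) : Supp B (0 : Multiset Atom) (.bang φ) := by
  simp only [Supp]
  intro C hC K p hK
  have := hK C (fun _ hx => hx) (supp_mono hC h)
  simpa using this

theorem suppMS_mono {B C : Base} (h : B ⊆ C) {K : Multiset Atom} {Γ : Multiset Fml}
    (hs : SuppMS B K Γ) : SuppMS C K Γ := by
  obtain ⟨l, h1, h2, h3⟩ := hs
  exact ⟨l, h1, h2, fun x hx => supp_mono h (h3 x hx)⟩

theorem suppMS_add {B : Base} {K1 K2 : Multiset Atom} {Γ1 Γ2 : Multiset Fml}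
    (h1 : SuppMS B K1 Γ1) (h2 : SuppMS B K2 Γ2) : SuppMS B (K1 + K2) (Γ1 + Γ2) := by
  obtain ⟨l1, a1, b1, c1⟩ := h1
  obtain ⟨l2, a2, b2, c2⟩ := h2
  refine ⟨l1 ++ l2, ?_, ?_, ?_⟩
  · simp [← a1, ← a2]
  · simp [← b1, ← b2]
  · intro x hx
    rcases List.mem_append.1 hx with hx | hx
    · exact c1 x hx
    · exact c2 x hx
theorem bangcut : ∀ (n : ℕ) (φ : Fml), deg φ ≤ n → ∀ (B : Base) (K L : Multiset Atom) (ψ : Fml),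
    Supp B K (.bang ψ) → (∀ D : Base, B ⊆ D → Supp D 0 ψ → Supp D L φ) → Supp B (K + L) φ := by
  intro n
  induction n with
  | zero => intro φ hφ; have := one_le_deg φ; omega
  | succ n ih =>
    intro φ hφ B K L ψ hb hyp
    have hbE : ∀ C, B ⊆ C → ∀ (K' : Multiset Atom) (p : Atom),
        (∀ D, C ⊆ D → Supp D 0 ψ → Deriv D K' p) → Deriv C (K + K') p := by
      simpa only [Supp] using hb
    cases φ with
    | atom p =>
      simp only [Supp] at hyp ⊢
      exact hbE B (fun _ hx => hx) L p (fun D hD h0 => hyp D hD h0)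
    | top => simp only [Supp]
    | zero =>
      simp only [Supp] at hyp ⊢
      intro K' p
      rw [add_assoc]
      exact hbE B (fun _ hx => hx) (L + K') p (fun D hD h0 => hyp D hD h0 K' p)
    | one =>
      simp only [Supp] at hyp ⊢
      intro C hC K' p hp
      rw [add_assoc]
      exact hbE C hC (L + K') p
        (fun D hD h0 => hyp D (hC.trans hD) h0 D (fun _ hx => hx) K' p (deriv_mono hD hp))
    | limp φ₁ φ₂ =>
      simp only [Supp] at hyp ⊢
      have hd2 : deg φ₂ ≤ n := by simp only [deg] at hφ; have := one_le_deg φ₁; omega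
      cases φ₁ with
      | bang α =>
        simp only [SuppInf1] at hyp ⊢
        intro C hC hα
        exact ih φ₂ hd2 C K L ψ (supp_mono hC hb)
          (fun D hD h0 => hyp D (hC.trans hD) h0 D (fun _ hx => hx) (supp_mono hD hα))
      | _ =>
        simp only [SuppInf1] at hyp ⊢ <;>
        · intro C hC K' h1
          rw [add_assoc]
          exact ih φ₂ hd2 C K (L + K') ψ (supp_mono hC hb)
            (fun D hD h0 => hyp D (hC.trans hD) h0 D (fun _ hx => hx) K' (supp_mono hD h1))
    | tens φ₁ φ₂ =>
      simp only [Supp] at hyp ⊢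
      intro C hC K' p hX
      rw [add_assoc]
      exact hbE C hC (L + K') p
        (fun D hD h0 => hyp D (hC.trans hD) h0 D (fun _ hx => hx) K' p (inf2_mono hD hX))
    | wth φ₁ φ₂ =>
      simp only [Supp] at hyp ⊢
      simp only [deg] at hφ
      exact ⟨ih φ₁ (by omega) B K L ψ hb (fun D hD h0 => (hyp D hD h0).1),
             ih φ₂ (by omega) B K L ψ hb (fun D hD h0 => (hyp D hD h0).2)⟩
    | plus φ₁ φ₂ =>
      simp only [Supp] at hyp ⊢
      intro C hC K' p h1 h2
      rw [add_assoc]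
      exact hbE C hC (L + K') p
        (fun D hD h0 => hyp D (hC.trans hD) h0 D (fun _ hx => hx) K' p (inf1_mono hD h1) (inf1_mono hD h2))
    | bang φ₁ =>
      simp only [Supp] at hyp ⊢
      intro C hC K' p hX
      rw [add_assoc]
      exact hbE C hC (L + K') p
        (fun D hD h0 => hyp D (hC.trans hD) h0 D (fun _ hx => hx) K' p
          (fun E hE h1 => hX E (hD.trans hE) h1))
theorem isBang_eq {ψ : Fml} (h : isBang ψ = true) : ψ = .bang (unbang ψ) := by
  cases ψ <;> simp [isBang] at h ⊢ <;> rfl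

theorem list_filt_map (l : List (Fml × Multiset Atom)) (b : Bool) :
    ((l.map Prod.fst).filter (fun ψ => isBang ψ = b)) =
      (l.filter (fun x => isBang x.1 = b)).map Prod.fst := by
  induction l with
  | nil => simp
  | cons a l ih => by_cases h : isBang a.1 = b <;> simp [List.filter_cons, h, ih]

theorem filt_map (l : List (Fml × Multiset Atom)) (b : Bool) :
    ((↑(l.map Prod.fst) : Multiset Fml).filter (fun ψ => isBang ψ = b)) =
      ↑((l.filter (fun x => isBang x.1 = b)).map Prod.fst) := by
  rw [Multiset.filter_coe, list_filt_map]

theorem fwd_aux : ∀ (l : List (Fml × Multiset Atom)) (C : Base) (M : Multiset Atom) (φ : Fml),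
    (∀ x ∈ l, Supp C x.2 x.1) →
    (∀ D : Base, C ⊆ D →
      SuppMS D 0 (↑((l.filter (fun x => isBang x.1)).map (fun x => unbang x.1)) : Multiset Fml) →
      Supp D (M + ((l.filter (fun x => isBang x.1 = false)).map Prod.snd).sum) φ) →
    Supp C (M + (l.map Prod.snd).sum) φ := by
  intro l
  induction l with
  | nil =>
    intro C M φ _ H
    simpa using H C (fun _ hx => hx) ⟨[], by simp⟩
  | cons a l ih =>
    intro C M φ hsupp H
    obtain ⟨ψ, k⟩ := a
    by_cases hψ : isBang ψ
    · -- bang case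
      have hfc1 : ((ψ, k) :: l).filter (fun x => isBang x.1) =
          (ψ, k) :: l.filter (fun x => isBang x.1) := by simp [List.filter_cons, hψ]
      have hfc2 : ((ψ, k) :: l).filter (fun x => isBang x.1 = false) =
          l.filter (fun x => isBang x.1 = false) := by simp [List.filter_cons, hψ]
      have hk : Supp C k (.bang (unbang ψ)) := by
        have := hsupp (ψ, k) (by simp)
        rwa [isBang_eq hψ] at this
      have main := bangcut (deg φ) φ le_rfl C k (M + (l.map Prod.snd).sum) (unbang ψ) hk
        (fun D hD h0 => ih D M φ (fun x hx => supp_mono hD (hsupp x (by simp [hx])))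
          (fun E hE hMS => by
            have hMS' : SuppMS E 0
                (↑(((ψ, k) :: l).filter (fun x => isBang x.1) |>.map (fun x => unbang x.1)) :
                  Multiset Fml) := by
              obtain ⟨l0, a0, b0, c0⟩ := hMS
              refine ⟨(unbang ψ, 0) :: l0, ?_, ?_, ?_⟩
              · rw [hfc1]
                show (unbang ψ) ::ₘ (↑(l0.map Prod.fst) : Multiset Fml) = _
                rw [a0]
                rfl
              · simp [b0]
              · intro x hx
                rcases List.mem_cons.1 hx with rfl | hx
                · exact supp_mono hE h0
                · exact c0 x hx
            have := H E (hD.trans hE) hMS'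
            rwa [hfc2] at this))
      rw [add_left_comm] at main
      simpa using main
    · -- non-bang case
      have hfc1 : ((ψ, k) :: l).filter (fun x => isBang x.1) =
          l.filter (fun x => isBang x.1) := by simp [List.filter_cons, hψ]
      have hfc2 : ((ψ, k) :: l).filter (fun x => isBang x.1 = false) =
          (ψ, k) :: l.filter (fun x => isBang x.1 = false) := by simp [List.filter_cons, hψ]
      have main := ih C (M + k) φ (fun x hx => hsupp x (by simp [hx]))
        (fun D hD hMS => by
          have := H D hD (by rwa [hfc1])
          rw [hfc2] at this
          simp only [List.map_cons, List.sum_cons] at this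
          rwa [← add_assoc] at this)
      rw [add_assoc] at main
      simpa using main
theorem generalized_inference (B : Base) (L : Multiset Atom) (Γ : Multiset Fml) (φ : Fml) :
    SuppSeq B L Γ φ ↔
      ∀ C : Base, B ⊆ C → ∀ K : Multiset Atom, SuppMS C K Γ → Supp C (L + K) φ := by
  constructor
  · intro h C hC K hMS
    obtain ⟨l, hfst, hsum, hsupp⟩ := hMS
    subst hfst hsum
    refine fwd_aux l C L φ hsupp (fun D hD hMS => ?_)
    refine h D (hC.trans hD) ((l.filter (fun x => isBang x.1 = false)).map Prod.snd).sum ?_ ?_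
    · rw [filt_map l true, Multiset.map_coe, List.map_map]
      simpa [Function.comp_def] using hMS
    · rw [filt_map l false]
      exact ⟨l.filter (fun x => isBang x.1 = false), rfl, rfl,
        fun x hx => supp_mono hD (hsupp x (List.mem_of_mem_filter hx))⟩
  · intro h C hC K hΔ hΘ
    have hB : SuppMS C 0 (Γ.filter (fun ψ => isBang ψ = true)) := by
      obtain ⟨l0, a0, b0, c0⟩ := hΔ
      refine ⟨(Γ.filter (fun ψ => isBang ψ = true)).toList.map (fun ψ => (ψ, (0 : Multiset Atom))),
        ?_, ?_, ?_⟩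
      · simp [List.map_map, Function.comp_def, Multiset.coe_toList]
      · simp [List.map_map]
      · intro x hx
        simp only [List.mem_map] at hx
        obtain ⟨ψ, hψmem, rfl⟩ := hx
        have hψΓ := Multiset.mem_toList.1 hψmem
        have hψb : isBang ψ = true := (Multiset.mem_filter.1 hψΓ).2
        have hmem : unbang ψ ∈ (↑(l0.map Prod.fst) : Multiset Fml) := by
          rw [a0]
          exact Multiset.mem_map_of_mem _ hψΓ
        rw [Multiset.mem_coe, List.mem_map] at hmem
        obtain ⟨x, hxmem, hx1⟩ := hmem
        have hx2 : x.2 = 0 := by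
          have := List.sum_eq_zero_iff.1 b0
          exact this x.2 (List.mem_map_of_mem (f := Prod.snd) hxmem)
        have hsx : Supp C 0 (unbang ψ) := by
          have := c0 x hxmem
          rwa [hx1, hx2] at this
        show Supp C 0 ψ
        rw [isBang_eq hψb]
        exact bang_intro hsx
    have hΓ : SuppMS C (0 + K) Γ := by
      have := suppMS_add hB hΘ
      have hsplit : Γ.filter (fun ψ => isBang ψ = true) + Γ.filter (fun ψ => isBang ψ = false) = Γ := by
        have h2 := Multiset.filter_add_not (fun ψ => isBang ψ = true) Γ
        simpa using h2
      rwa [hsplit] at this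
    have := h C hC (0 + K) hΓ
    rwa [zero_add] at this
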